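/- arXiv:2101.12179 — 2 statements merged into one kernel-verified Lean document; each statement's English description precedes it below -/
import Mathlib

section
/- Let 1 ≤ p, q < ∞, let 0 < α < 1/p, and let r be the smallest integer with r > α. Let a, b be real numbers with 0 ≤ a < b ≤ 1. Then the Besov seminorm of the indicator function 1_{[a,b)} on [0,1] satisfies the explicit bound |1_{[a,b)}|_{B^α_{p,q}} ≤ 2^r · ( 1/(q(1/p − α)) + 1/(αq) )^{1/q}; in particular it is finite. -/
open MeasureTheory Set
open scoped ENNReal

/-- B-spline basis function of degree `k` with knot vector `ξ = (ξ₀, …, ξ_{k+1})`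
(0-indexed), defined by the Cox–de Boor recursion. -/
noncomputable def bspline : (k : ℕ) → (Fin (k + 2) → ℝ) → ℝ → ℝ
  | 0, ξ, x => if ξ 0 ≤ x ∧ x < ξ 1 then 1 else 0
  | (m + 1), ξ, x =>
      (x - ξ 0) / (ξ ⟨m + 1, by omega⟩ - ξ 0) * bspline m (fun i => ξ i.castSucc) x
      + (ξ (Fin.last (m + 2)) - x) / (ξ (Fin.last (m + 2)) - ξ 1) *
          bspline m (fun i => ξ i.succ) x

/-- The `r`-th order forward finite difference `Δ_h^r f (x)`. -/
noncomputable def finiteDiff (r : ℕ) (h : ℝ) (f : ℝ → ℝ) (x : ℝ) : ℝ :=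
  ∑ j ∈ Finset.range (r + 1), (r.choose j : ℝ) * (-1 : ℝ) ^ (r - j) * f (x + j * h)

/-- The `r`-th order modulus of smoothness `ω_r(f, t)_p` on `[0,1]`. -/
noncomputable def modSmooth (p : ℝ) (r : ℕ) (f : ℝ → ℝ) (t : ℝ) : ℝ :=
  sSup ((fun h => (∫ x in Set.Ioo (0 : ℝ) (1 - r * h), |finiteDiff r h f x| ^ p) ^ (1 / p)) ''
    Set.Ioc 0 t)

/-- The smallest integer `r` with `r > α` (for `α > 0`). -/
noncomputable def besovR (α : ℝ) : ℕ := ⌊α⌋₊ + 1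

/-- The Besov seminorm `|f|_{B^α_{p,q}}` on `[0,1]`, valued in `ℝ≥0∞`. -/
noncomputable def besovSeminorm (p q α : ℝ) (f : ℝ → ℝ) : ℝ≥0∞ :=
  (∫⁻ t in Set.Ioi (0 : ℝ),
      ENNReal.ofReal ((t ^ (-α) * modSmooth p (besovR α) f t) ^ q / t)) ^ (1 / q)

/-- Membership in the Besov space `B^α_{p,q}([0,1])`: `f ∈ L^p([0,1])` and the
Besov seminorm is finite. -/
def memBesov (p q α : ℝ) (f : ℝ → ℝ) : Prop :=
  MemLp f (ENNReal.ofReal p) (volume.restrict (Set.Icc (0 : ℝ) 1)) ∧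
  besovSeminorm p q α f < ⊤

/-!
Since `α < 1/p ≤ 1`, only the first difference
`Δ_h 1_{[a,b)}(x) = 1_{[a,b)}(x+h) - 1_{[a,b)}(x)` enters. Its absolute value is the indicator
of `([a,b) - h) ∆ [a,b)`, a set of measure at most `2h`, while the domain `(0, 1 - h)` has
measure at most `1`; hence `ω_1(1_{[a,b)}, t)_p ≤ 2 min(t,1)^{1/p}`. Splitting
the Besov integral of `t^{-α} min(t,1)^{1/p}` at `t = 1` leaves two power integrals,
`∫₀¹ t^{q(1/p-α)-1} dt = 1/(q(1/p-α))` and `∫₁^∞ t^{-αq-1} dt = 1/(αq)`.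
-/

open scoped symmDiff

lemma finiteDiff_one (h : ℝ) (f : ℝ → ℝ) (x : ℝ) : finiteDiff 1 h f x = f (x + h) - f x := by
  simp [finiteDiff, Finset.sum_range_succ, neg_add_eq_sub]

lemma modSmooth_nonneg (p : ℝ) (r : ℕ) (f : ℝ → ℝ) (t : ℝ) : 0 ≤ modSmooth p r f t :=
  Real.sSup_nonneg <| by
    rintro _ ⟨h, -, rfl⟩
    exact Real.rpow_nonneg (integral_nonneg fun _ ↦ Real.rpow_nonneg (abs_nonneg _) _) _

lemma abs_finiteDiff_one_indicator_rpow {p : ℝ} (hp : 0 < p) (s : Set ℝ) (h x : ℝ) :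
    |finiteDiff 1 h (s.indicator fun _ ↦ 1) x| ^ p = (((· + h) ⁻¹' s) ∆ s).indicator 1 x := by
  by_cases h₁ : x + h ∈ s <;> by_cases h₂ : x ∈ s <;>
    simp [finiteDiff_one, mem_symmDiff, h₁, h₂, hp.ne']

lemma volume_Ico_sub_symmDiff_Ico_le (a b : ℝ) {h : ℝ} (hh : 0 ≤ h) :
    volume (Ico (a - h) (b - h) ∆ Ico a b) ≤ ENNReal.ofReal (2 * h) :=
  calc volume (Ico (a - h) (b - h) ∆ Ico a b)
      ≤ volume (Ico (a - h) a ∪ Ico (b - h) b) := by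
        refine measure_mono fun x hx ↦ ?_
        simp only [mem_symmDiff, mem_Ico, mem_union] at hx ⊢
        by_contra!
        grind
    _ ≤ volume (Ico (a - h) a) + volume (Ico (b - h) b) := measure_union_le _ _
    _ = ENNReal.ofReal (2 * h) := by
        rw [Real.volume_Ico, Real.volume_Ico, ← ENNReal.ofReal_add] <;> ring_nf <;> linarith

lemma integral_abs_finiteDiff_one_indicator_Ico_le {p h : ℝ} (hp : 0 < p) (hh : 0 ≤ h)
    (a b : ℝ) :
    ∫ x in Ioo 0 (1 - (1 : ℕ) * h), |finiteDiff 1 h ((Ico a b).indicator fun _ ↦ 1) x| ^ p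
      ≤ 2 * min h 1 := by
  set μ := volume.restrict (Ioo (0 : ℝ) (1 - (1 : ℕ) * h))
  set S := ((· + h) ⁻¹' Ico a b) ∆ Ico a b
  have hS : MeasurableSet S :=
    (measurableSet_Ico.preimage (measurable_add_const h)).symmDiff measurableSet_Ico
  have hμS : μ S ≤ ENNReal.ofReal (min (2 * h) 1) := by
    rw [ENNReal.ofReal_min]
    refine le_min ?_ ?_
    · calc μ S ≤ volume S := Measure.restrict_apply_le _ _
        _ ≤ _ := by
          simpa [S, preimage_add_const_Ico] using volume_Ico_sub_symmDiff_Ico_le a b hh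
    · calc μ S ≤ μ univ := measure_mono (subset_univ S)
        _ = ENNReal.ofReal (1 - (1 : ℕ) * h - 0) := by
          rw [Measure.restrict_apply_univ, Real.volume_Ioo]
        _ ≤ ENNReal.ofReal 1 := ENNReal.ofReal_le_ofReal (by simp [hh])
  simp_rw [abs_finiteDiff_one_indicator_rpow hp]
  rw [integral_indicator_one hS]
  calc μ.real S ≤ min (2 * h) 1 := ENNReal.toReal_le_of_le_ofReal (by positivity) hμS
    _ ≤ 2 * min h 1 := by
      rw [mul_min_of_nonneg _ _ zero_le_two]
      exact min_le_min le_rfl (by norm_num)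

lemma modSmooth_one_indicator_Ico_le {p t : ℝ} (hp : 1 ≤ p) (ht : 0 ≤ t) (a b : ℝ) :
    modSmooth p 1 ((Ico a b).indicator fun _ ↦ 1) t ≤ 2 * min t 1 ^ (1 / p) := by
  have hp₀ : 0 < p := by linarith
  refine Real.sSup_le ?_ (by positivity)
  rintro _ ⟨h, ⟨hh₀, hht⟩, rfl⟩
  calc _ ≤ (2 * min h 1) ^ (1 / p) :=
        Real.rpow_le_rpow (integral_nonneg fun _ ↦ Real.rpow_nonneg (abs_nonneg _) _)
          (integral_abs_finiteDiff_one_indicator_Ico_le hp₀ hh₀.le a b) (by positivity)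
    _ = 2 ^ (1 / p) * min h 1 ^ (1 / p) := Real.mul_rpow zero_le_two (by positivity)
    _ ≤ 2 ^ (1 : ℝ) * min t 1 ^ (1 / p) := by
        gcongr
        · exact one_le_two
        · rw [div_le_one hp₀]; exact hp
    _ = 2 * min t 1 ^ (1 / p) := by rw [Real.rpow_one]

lemma lintegral_Ioc_zero_one_rpow_sub_one {s : ℝ} (hs : 0 < s) :
    ∫⁻ t in Ioc 0 1, ENNReal.ofReal (t ^ (s - 1)) = ENNReal.ofReal (1 / s) := by
  have hexp : -1 < s - 1 := by linarith
  have hint : IntegrableOn (fun t : ℝ ↦ t ^ (s - 1)) (Ioc 0 1) := by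
    simpa [intervalIntegrable_iff, uIoc_of_le zero_le_one]
      using intervalIntegral.intervalIntegrable_rpow' (a := 0) (b := 1) hexp
  rw [← ofReal_integral_eq_lintegral_ofReal hint
    ((ae_restrict_iff' measurableSet_Ioc).mpr
      (.of_forall fun t ht ↦ Real.rpow_nonneg ht.1.le _)),
    ← intervalIntegral.integral_of_le zero_le_one, integral_rpow (.inl hexp)]
  simp [hs.ne']

lemma lintegral_Ioi_one_rpow_neg_sub_one {s : ℝ} (hs : 0 < s) :
    ∫⁻ t in Ioi 1, ENNReal.ofReal (t ^ (-s - 1)) = ENNReal.ofReal (1 / s) := by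
  have hexp : -s - 1 < -1 := by linarith
  rw [← ofReal_integral_eq_lintegral_ofReal (integrableOn_Ioi_rpow_of_lt hexp one_pos)
    ((ae_restrict_iff' measurableSet_Ioi).mpr
      (.of_forall fun t (ht : 1 < t) ↦ Real.rpow_nonneg (one_pos.trans ht).le _)),
    integral_Ioi_rpow_of_lt hexp one_pos, sub_add_cancel, Real.one_rpow]
  congr 1
  field_simp

lemma rpow_neg_mul_mul_rpow_rpow_div {t : ℝ} (ht : 0 < t) {C : ℝ} (hC : 0 ≤ C) (α β q : ℝ) :
    (t ^ (-α) * (C * t ^ β)) ^ q / t = C ^ q * t ^ (q * (β - α) - 1) := by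
  rw [Real.rpow_sub ht, Real.rpow_one, mul_comm q, Real.rpow_mul ht.le, Real.rpow_sub ht,
    ← mul_div_assoc, ← Real.mul_rpow hC (by positivity), Real.rpow_neg ht.le]
  congr 2
  field_simp

lemma lintegral_Ioi_rpow_neg_mul_min_rpow {q α β C : ℝ} (hq : 0 < q) (hα : 0 < α)
    (hαβ : α < β) (hC : 0 ≤ C) :
    ∫⁻ t in Ioi 0, ENNReal.ofReal ((t ^ (-α) * (C * min t 1 ^ β)) ^ q / t)
      = ENNReal.ofReal (C ^ q * (1 / (q * (β - α)) + 1 / (α * q))) := by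
  have hCq : 0 ≤ C ^ q := by positivity
  have hβα : 0 < β - α := sub_pos.2 hαβ
  have near : ∫⁻ t in Ioc 0 1, ENNReal.ofReal ((t ^ (-α) * (C * min t 1 ^ β)) ^ q / t)
      = ENNReal.ofReal (C ^ q) * ENNReal.ofReal (1 / (q * (β - α))) := by
    rw [← lintegral_Ioc_zero_one_rpow_sub_one (by positivity),
      ← lintegral_const_mul' _ _ ENNReal.ofReal_ne_top]
    refine setLIntegral_congr_fun measurableSet_Ioc fun t ⟨ht₀, ht₁⟩ ↦ ?_
    rw [← ENNReal.ofReal_mul hCq, min_eq_left ht₁, rpow_neg_mul_mul_rpow_rpow_div ht₀ hC]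
  have far : ∫⁻ t in Ioi 1, ENNReal.ofReal ((t ^ (-α) * (C * min t 1 ^ β)) ^ q / t)
      = ENNReal.ofReal (C ^ q) * ENNReal.ofReal (1 / (α * q)) := by
    rw [← lintegral_Ioi_one_rpow_neg_sub_one (by positivity),
      ← lintegral_const_mul' _ _ ENNReal.ofReal_ne_top]
    refine setLIntegral_congr_fun measurableSet_Ioi fun t (ht : 1 < t) ↦ ?_
    have ht₀ : 0 < t := one_pos.trans ht
    -- on `(1, ∞)` the weight is the case `β = 0` of the identity used near `0`
    rw [← ENNReal.ofReal_mul hCq, min_eq_right ht.le, Real.one_rpow,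
      show C * 1 = C * t ^ (0 : ℝ) by simp, rpow_neg_mul_mul_rpow_rpow_div ht₀ hC]
    ring_nf
  rw [← Ioc_union_Ioi_eq_Ioi zero_le_one,
    lintegral_union measurableSet_Ioi (Ioc_disjoint_Ioi le_rfl), near, far,
    ← ENNReal.ofReal_mul hCq, ← ENNReal.ofReal_mul hCq, ← ENNReal.ofReal_add, mul_add]
  all_goals positivity

lemma besovSeminorm_le_of_modSmooth_le {p q α β C : ℝ} {f : ℝ → ℝ} (hq : 0 < q) (hα : 0 < α)
    (hαβ : α < β) (hC : 0 ≤ C)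
    (hf : ∀ t, 0 < t → modSmooth p (besovR α) f t ≤ C * min t 1 ^ β) :
    besovSeminorm p q α f ≤ ENNReal.ofReal (C * (1 / (q * (β - α)) + 1 / (α * q)) ^ (1 / q)) := by
  have hS : 0 ≤ 1 / (q * (β - α)) + 1 / (α * q) := by
    have := sub_pos.2 hαβ; positivity
  calc besovSeminorm p q α f
      ≤ (∫⁻ t in Ioi 0, ENNReal.ofReal ((t ^ (-α) * (C * min t 1 ^ β)) ^ q / t)) ^ (1 / q) := by
        refine ENNReal.rpow_le_rpow (setLIntegral_mono' measurableSet_Ioi fun t (ht : 0 < t) ↦ ?_)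
          (by positivity)
        gcongr
        · exact mul_nonneg (Real.rpow_nonneg ht.le _) (modSmooth_nonneg _ _ _ _)
        · exact hf t ht
    _ = ENNReal.ofReal (C ^ q * (1 / (q * (β - α)) + 1 / (α * q))) ^ (1 / q) := by
        rw [lintegral_Ioi_rpow_neg_mul_min_rpow hq hα hαβ hC]
    _ = ENNReal.ofReal (C * (1 / (q * (β - α)) + 1 / (α * q)) ^ (1 / q)) := by
        rw [ENNReal.ofReal_rpow_of_nonneg (by positivity) (by positivity),
          Real.mul_rpow (by positivity) hS, ← Real.rpow_mul hC, mul_one_div_cancel hq.ne',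
          Real.rpow_one]

theorem indicator_besovSeminorm_bound_general (p q α : ℝ) (hp : 1 ≤ p) (hq : 1 ≤ q)
    (hα : 0 < α) (hαp : α < 1 / p) (a b : ℝ) :
    besovSeminorm p q α (Set.indicator (Set.Ico a b) fun _ => (1 : ℝ)) ≤
      ENNReal.ofReal
        (2 ^ besovR α * (1 / (q * (1 / p - α)) + 1 / (α * q)) ^ (1 / q)) := by
  have hr : besovR α = 1 := by
    have hα₁ : α < 1 := hαp.trans_le (div_le_one_of_le₀ hp (by linarith))
    simp [besovR, Nat.floor_eq_zero.mpr hα₁]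
  rw [hr, pow_one]
  refine besovSeminorm_le_of_modSmooth_le (by linarith) hα hαp zero_le_two fun t ht ↦ ?_
  rw [hr]
  exact modSmooth_one_indicator_Ico_le hp ht.le a b

/-- for `1 ≤ p, q < ∞`, `0 < α < 1/p`, `r` the smallest integer with
`r > α`, and `0 ≤ a < b ≤ 1`, the Besov seminorm of the indicator of `[a, b)`
satisfies the explicit bound
`|1_{[a,b)}|_{B^α_{p,q}} ≤ 2^r · ( 1/(q(1/p − α)) + 1/(αq) )^{1/q}`. -/
theorem indicator_besovSeminorm_bound (p q α : ℝ) (hp : 1 ≤ p) (hq : 1 ≤ q)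
    (hα : 0 < α) (hαp : α < 1 / p) (a b : ℝ) (ha : 0 ≤ a) (hab : a < b) (hb : b ≤ 1) :
    besovSeminorm p q α (Set.indicator (Set.Ico a b) fun _ => (1 : ℝ)) ≤
      ENNReal.ofReal
        (2 ^ besovR α * (1 / (q * (1 / p - α)) + 1 / (α * q)) ^ (1 / q)) :=
  indicator_besovSeminorm_bound_general p q α hp hq hα hαp a b
end

section
/- Let k ≥ 1 be an integer, let ξ = (ξ_1, …, ξ_{k+2}) be a strictly increasing knot vector with 0 ≤ ξ_1 and ξ_{k+2} ≤ 1, let 1 ≤ p < ∞, and let r ≥ k + 1 be an integer. Then there exists a constant C > 0 (depending on k, ξ, p, r) such that the r-th order modulus of smoothness of B_k(·; ξ) on [0,1] satisfies ω_r(B_k(·; ξ), t)_p ≤ C · t^{k + 1/p} for all t ∈ (0, 1]. -/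
open MeasureTheory Set
open scoped ENNReal

/-!
The B-spline is a combination of the truncated powers `(x - ξᵢ)₊ᵏ` (the divided-difference
formula, proved from the Cox–de Boor recursion). For `r > k` the difference `Δ_h^r` annihilates
polynomials of degree `k`, so `Δ_h^r (· - a)₊ᵏ (x)` vanishes unless the stencil `[x, x + rh]`
straddles `a`, i.e. unless `x ∈ [a - rh, a)`, and there it is at most `2ʳ (rh)ᵏ`. Hence
`|Δ_h^r B_k|ᵖ ≲ h^{kp}` on a set of measure `≲ h` and vanishes elsewhere, which integrates to
`ω_r(B_k, t)_p ≲ t^{k + 1/p}`.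
-/

open Lagrange

noncomputable def truncPow (k : ℕ) (a x : ℝ) : ℝ := if a ≤ x then (x - a) ^ k else 0

theorem truncPow_succ (k : ℕ) (a x : ℝ) : truncPow (k + 1) a x = (x - a) * truncPow k a x := by
  unfold truncPow
  split_ifs <;> ring

theorem truncPow_eq_zero_of_lt {k : ℕ} {a x : ℝ} (hx : x < a) : truncPow k a x = 0 :=
  if_neg hx.not_ge

theorem truncPow_eqOn_Ici (k : ℕ) (a : ℝ) :
    EqOn (truncPow k a) (fun x => (x - a) ^ k) (Ici a) := fun _ hx => if_pos hx

theorem abs_truncPow_le {k : ℕ} {a x δ : ℝ} (hδ : 0 ≤ δ) (hx : x ≤ a + δ) :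
    |truncPow k a x| ≤ δ ^ k := by
  unfold truncPow
  split_ifs with ha
  · rw [abs_of_nonneg (pow_nonneg (sub_nonneg.2 ha) k)]
    exact pow_le_pow_left₀ (sub_nonneg.2 ha) (by linarith) k
  · simpa using pow_nonneg hδ k

theorem nodalWeight_univ_eq_prod_ite {n : ℕ} (v : Fin n → ℝ) (i : Fin n) :
    nodalWeight Finset.univ v i = ∏ j, if j ≠ i then (v i - v j)⁻¹ else 1 := by
  rw [nodalWeight, ← Finset.filter_ne', Finset.prod_filter]

theorem nodalWeight_castSucc {n : ℕ} {ξ : Fin (n + 2) → ℝ} (hξ : Function.Injective ξ)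
    (i : Fin (n + 1)) :
    nodalWeight Finset.univ (fun i : Fin (n + 1) => ξ i.castSucc) i
      = nodalWeight Finset.univ ξ i.castSucc * (ξ i.castSucc - ξ (Fin.last _)) := by
  have hne : ξ i.castSucc - ξ (Fin.last _) ≠ 0 :=
    sub_ne_zero.2 (hξ.ne (Fin.castSucc_ne_last i))
  simp [nodalWeight_univ_eq_prod_ite, Fin.prod_univ_castSucc (n := n + 1),
    (Fin.castSucc_ne_last i).symm, hne]

theorem nodalWeight_succ {n : ℕ} {ξ : Fin (n + 2) → ℝ} (hξ : Function.Injective ξ)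
    (i : Fin (n + 1)) :
    nodalWeight Finset.univ (fun i : Fin (n + 1) => ξ i.succ) i
      = nodalWeight Finset.univ ξ i.succ * (ξ i.succ - ξ 0) := by
  have hne : ξ i.succ - ξ 0 ≠ 0 := sub_ne_zero.2 (hξ.ne (Fin.succ_ne_zero i))
  simp [nodalWeight_univ_eq_prod_ite, Fin.prod_univ_succ (n := n + 1),
    (Fin.succ_ne_zero i).symm, mul_right_comm _ _ (ξ i.succ - ξ 0), hne]

theorem sum_nodalWeight_castSucc {n : ℕ} {ξ : Fin (n + 2) → ℝ} (hξ : Function.Injective ξ)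
    (g : Fin (n + 2) → ℝ) :
    ∑ i, nodalWeight Finset.univ (fun i : Fin (n + 1) => ξ i.castSucc) i * g i.castSucc
      = ∑ i, nodalWeight Finset.univ ξ i * (ξ i - ξ (Fin.last _)) * g i := by
  simp [Fin.sum_univ_castSucc (n := n + 1), nodalWeight_castSucc hξ]

theorem sum_nodalWeight_succ {n : ℕ} {ξ : Fin (n + 2) → ℝ} (hξ : Function.Injective ξ)
    (g : Fin (n + 2) → ℝ) :
    ∑ i, nodalWeight Finset.univ (fun i : Fin (n + 1) => ξ i.succ) i * g i.succ
      = ∑ i, nodalWeight Finset.univ ξ i * (ξ i - ξ 0) * g i := by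
  simp [Fin.sum_univ_succ (n := n + 1), nodalWeight_succ hξ]

/-- `∑ i, nodalWeight univ ξ i * f (ξ i)` is the divided difference `f[ξ₀, …, ξ_{k+1}]`: this is
the classical `B_k(x; ξ) = (ξ_{k+1} - ξ₀) [ξ₀, …, ξ_{k+1}] (· - x)₊ᵏ`, with `(t - x)₊ᵏ` traded for
`(-1)^{k+1} (x - t)₊ᵏ` modulo polynomials of degree `k`, which the divided difference kills. -/
theorem bspline_eq_sum_nodalWeight_mul_truncPow (k : ℕ) {ξ : Fin (k + 2) → ℝ}
    (hξ : StrictMono ξ) (x : ℝ) :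
    bspline k ξ x = (-1) ^ (k + 1) * (ξ (Fin.last _) - ξ 0) *
      ∑ i, nodalWeight Finset.univ ξ i * truncPow k (ξ i) x := by
  induction k generalizing x with
  | zero =>
    have h01 : ξ 0 < ξ 1 := hξ zero_lt_one
    have h10 : ξ 1 - ξ 0 ≠ 0 := sub_ne_zero.2 h01.ne'
    have h01' : ξ 0 - ξ 1 ≠ 0 := sub_ne_zero.2 h01.ne
    simp [bspline, nodalWeight_univ_eq_prod_ite, Fin.prod_univ_two, Fin.sum_univ_two, truncPow]
    split_ifs <;> field_simp <;> grind
  | succ m ih =>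
    rw [bspline, ih (ξ := fun i => ξ i.castSucc) (hξ.comp Fin.strictMono_castSucc),
      ih (ξ := fun i => ξ i.succ) (hξ.comp Fin.strictMono_succ),
      sum_nodalWeight_castSucc hξ.injective (fun i => truncPow m (ξ i) x),
      sum_nodalWeight_succ hξ.injective (fun i => truncPow m (ξ i) x)]
    simp only [Fin.castSucc_zero, Fin.succ_zero_eq_one, Fin.succ_last]
    set w := nodalWeight Finset.univ ξ
    set b := ξ (Fin.last (m + 1 + 1))
    have hleft : ξ (Fin.last (m + 1)).castSucc - ξ 0 ≠ 0 :=
      sub_ne_zero.2 (hξ.injective.ne (by simp [Fin.ext_iff]))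
    have hright : b - ξ 1 ≠ 0 := sub_ne_zero.2 (hξ.injective.ne (by simp [Fin.ext_iff]))
    -- termwise `(x - ξ₀) (ξᵢ - b) + (b - x) (ξᵢ - ξ₀) = -(b - ξ₀) (x - ξᵢ)`
    have hsum : (x - ξ 0) * ∑ i, w i * (ξ i - b) * truncPow m (ξ i) x
        + (b - x) * ∑ i, w i * (ξ i - ξ 0) * truncPow m (ξ i) x
        = -(b - ξ 0) * ∑ i, w i * truncPow (m + 1) (ξ i) x := by
      simp only [Finset.mul_sum, ← Finset.sum_add_distrib, truncPow_succ]
      exact Finset.sum_congr rfl fun i _ => by ring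
    -- `bspline` writes the knot `ξ (Fin.last (m + 1)).castSucc` as `ξ ⟨m + 1, _⟩`
    change _ / (ξ (Fin.last (m + 1)).castSucc - ξ 0) * _ + _ = _
    field_simp
    linear_combination (-1) ^ (m + 1) * hsum

theorem add_natCast_mul_mem_Icc {r j : ℕ} (hj : j ∈ Finset.range (r + 1)) {h : ℝ} (hh : 0 ≤ h)
    (x : ℝ) : x + j * h ∈ Icc x (x + r * h) := by
  have hjr : (j : ℝ) ≤ r := by exact_mod_cast Nat.lt_succ_iff.1 (Finset.mem_range.1 hj)
  exact ⟨by nlinarith [j.cast_nonneg (α := ℝ)], by nlinarith⟩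

theorem finiteDiff_congr {r : ℕ} {h x : ℝ} {f g : ℝ → ℝ} (hh : 0 ≤ h)
    (hfg : EqOn f g (Icc x (x + r * h))) : finiteDiff r h f x = finiteDiff r h g x :=
  Finset.sum_congr rfl fun j hj => by rw [hfg (add_natCast_mul_mem_Icc hj hh x)]

theorem finiteDiff_eq_fwdDiff_iter (r : ℕ) (h : ℝ) (f : ℝ → ℝ) (x : ℝ) :
    finiteDiff r h f x = (fwdDiff 1)^[r] (fun s => f (x + s * h)) 0 := by
  rw [fwdDiff_iter_eq_sum_shift, finiteDiff]
  refine Finset.sum_congr rfl fun j _ => ?_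
  simp only [zsmul_eq_mul, nsmul_eq_mul, zero_add, mul_one]
  push_cast
  ring

open Polynomial in
theorem finiteDiff_eval_eq_zero {r : ℕ} {P : Polynomial ℝ} (hP : P.natDegree < r) (h x : ℝ) :
    finiteDiff r h P.eval x = 0 := by
  set Q := P.comp (C h * X + C x)
  have hQ : Q.natDegree < r :=
    (natDegree_comp_le.trans (mul_le_of_le_one_right' natDegree_linear_le)).trans_lt hP
  have hPQ : (fun s => P.eval (x + s * h)) = Q.eval := by
    funext s
    simp only [Q, eval_comp, eval_add, eval_mul, eval_C, eval_X]
    ring_nf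
  rw [finiteDiff_eq_fwdDiff_iter, hPQ, fwdDiff_iter_eq_zero_of_degree_lt hQ, Pi.zero_apply]

theorem abs_finiteDiff_le {r : ℕ} {h x B : ℝ} {f : ℝ → ℝ} (hh : 0 ≤ h)
    (hf : ∀ y ∈ Icc x (x + r * h), |f y| ≤ B) : |finiteDiff r h f x| ≤ 2 ^ r * B := by
  calc |finiteDiff r h f x|
      ≤ ∑ j ∈ Finset.range (r + 1), |(r.choose j : ℝ) * (-1) ^ (r - j) * f (x + j * h)| :=
        Finset.abs_sum_le_sum_abs _ _
    _ ≤ ∑ j ∈ Finset.range (r + 1), (r.choose j : ℝ) * B := by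
        refine Finset.sum_le_sum fun j hj => ?_
        rw [abs_mul, abs_mul, abs_pow, abs_neg, abs_one, one_pow, mul_one, Nat.abs_cast]
        exact mul_le_mul_of_nonneg_left (hf _ (add_natCast_mul_mem_Icc hj hh x))
          (Nat.cast_nonneg _)
    _ = 2 ^ r * B := by
        rw [← Finset.sum_mul, ← Nat.cast_sum, Nat.sum_range_choose, Nat.cast_pow,
          Nat.cast_ofNat]

theorem finiteDiff_sum {ι : Type*} (s : Finset ι) (r : ℕ) (h : ℝ) (c : ι → ℝ)
    (f : ι → ℝ → ℝ) (x : ℝ) :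
    finiteDiff r h (fun y => ∑ i ∈ s, c i * f i y) x = ∑ i ∈ s, c i * finiteDiff r h (f i) x := by
  simp only [finiteDiff, Finset.mul_sum]
  rw [Finset.sum_comm]
  exact Finset.sum_congr rfl fun i _ => Finset.sum_congr rfl fun j _ => by ring

open Polynomial in
theorem finiteDiff_truncPow_of_le {k r : ℕ} (hkr : k < r) {h a x : ℝ} (hh : 0 ≤ h)
    (ha : a ≤ x) :
    finiteDiff r h (truncPow k a) x = 0 := by
  have hdeg : ((X - C a) ^ k).natDegree < r := by
    rwa [natDegree_pow, natDegree_X_sub_C, mul_one]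
  rw [finiteDiff_congr hh (g := ((X - C a) ^ k).eval), finiteDiff_eval_eq_zero hdeg]
  intro y hy
  simp [truncPow_eqOn_Ici k a (ha.trans hy.1)]

theorem finiteDiff_truncPow_of_lt {k r : ℕ} {h a x : ℝ} (hh : 0 ≤ h) (ha : x + r * h < a) :
    finiteDiff r h (truncPow k a) x = 0 := by
  rw [finiteDiff_congr hh (g := 0) fun y hy => truncPow_eq_zero_of_lt (hy.2.trans_lt ha)]
  simp [finiteDiff]

theorem abs_finiteDiff_truncPow_le_indicator {k r : ℕ} (hkr : k < r) {h : ℝ} (hh : 0 ≤ h)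
    (a x : ℝ) :
    |finiteDiff r h (truncPow k a) x|
      ≤ (Ico (a - r * h) a).indicator (fun _ => 2 ^ r * (r * h) ^ k) x := by
  by_cases hx : x ∈ Ico (a - r * h) a
  · rw [indicator_of_mem hx]
    exact abs_finiteDiff_le hh fun y hy =>
      abs_truncPow_le (by positivity) (by linarith [hy.2, hx.2])
  · rw [indicator_of_notMem hx]
    rcases le_or_gt a x with hax | hxa
    · simp [finiteDiff_truncPow_of_le hkr hh hax]
    · have : x + r * h < a := by
        by_contra!
        exact hx ⟨by linarith, hxa⟩
      simp [finiteDiff_truncPow_of_lt hh this]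

theorem abs_finiteDiff_sum_truncPow_le_indicator {ι : Type*} [Fintype ι] {k r : ℕ}
    (hkr : k < r) {h : ℝ} (hh : 0 ≤ h) (c a : ι → ℝ) (x : ℝ) :
    |finiteDiff r h (fun y => ∑ i, c i * truncPow k (a i) y) x|
      ≤ (⋃ i, Ico (a i - r * h) (a i)).indicator
          (fun _ => (∑ i, |c i|) * (2 ^ r * (r * h) ^ k)) x := by
  rw [finiteDiff_sum, indicator_const_mul _ (fun _ => 2 ^ r * (r * h) ^ k), Finset.sum_mul]
  refine (Finset.abs_sum_le_sum_abs _ _).trans (Finset.sum_le_sum fun i _ => ?_)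
  rw [abs_mul]
  refine mul_le_mul_of_nonneg_left ?_ (abs_nonneg _)
  exact (abs_finiteDiff_truncPow_le_indicator hkr hh (a i) x).trans
    (indicator_le_indicator_of_subset (subset_iUnion (fun i => Ico (a i - r * h) (a i)) i)
      (fun _ => by positivity) x)

theorem measureReal_iUnion_Ico_sub_le {ι : Type*} [Fintype ι] (a : ι → ℝ) {δ : ℝ}
    (hδ : 0 ≤ δ) :
    volume.real (⋃ i, Ico (a i - δ) (a i)) ≤ Fintype.card ι * δ := by
  calc volume.real (⋃ i, Ico (a i - δ) (a i))
      ≤ ∑ i, volume.real (Ico (a i - δ) (a i)) := measureReal_iUnion_fintype_le _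
    _ = Fintype.card ι * δ := by simp [hδ]

theorem setIntegral_le_mul_measureReal_of_le_indicator {α : Type*} [MeasurableSpace α]
    {μ : Measure α} {f : α → ℝ} {s S : Set α} {M : ℝ} (hS : MeasurableSet S) (hSμ : μ S ≠ ∞)
    (hM : 0 ≤ M) (hf0 : 0 ≤ f) (hf : ∀ x, f x ≤ S.indicator (fun _ => M) x) :
    ∫ x in s, f x ∂μ ≤ M * μ.real S := by
  calc ∫ x in s, f x ∂μ
      ≤ ∫ x in s, S.indicator (fun _ => M) x ∂μ :=
        integral_mono_of_nonneg (.of_forall hf0)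
          ((integrable_indicator_iff hS).2 (integrableOn_const hSμ)).integrableOn (.of_forall hf)
    _ = M * (μ.restrict s).real S := by
        rw [integral_indicator_const M hS, smul_eq_mul, mul_comm]
    _ ≤ M * μ.real S :=
        mul_le_mul_of_nonneg_left (ENNReal.toReal_mono hSμ (μ.restrict_apply_le s S)) hM

section SumTruncPow

variable {ι : Type*} [Fintype ι] {k r : ℕ} {p : ℝ} (c a : ι → ℝ)

theorem integral_abs_finiteDiff_sum_truncPow_rpow_le (hkr : k < r) (hp : 0 < p) {h : ℝ}
    (hh : 0 ≤ h) (s : Set ℝ) :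
    ∫ x in s, |finiteDiff r h (fun y => ∑ i, c i * truncPow k (a i) y) x| ^ p
      ≤ ((∑ i, |c i|) * (2 ^ r * (r * h) ^ k)) ^ p * (Fintype.card ι * (r * h)) := by
  set S := ⋃ i, Ico (a i - r * h) (a i)
  have hSμ : volume S ≠ ∞ :=
    ((measure_iUnion_fintype_le _ _).trans_lt
      (ENNReal.sum_lt_top.2 fun i _ => measure_Ico_lt_top)).ne
  refine (setIntegral_le_mul_measureReal_of_le_indicator (s := s)
    (MeasurableSet.iUnion fun i => measurableSet_Ico) hSμ (by positivity)
    (fun x => by positivity) fun x => ?_).trans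
    (mul_le_mul_of_nonneg_left (measureReal_iUnion_Ico_sub_le a (by positivity))
      (by positivity))
  have hx := abs_finiteDiff_sum_truncPow_le_indicator hkr hh c a x
  by_cases hxS : x ∈ S
  · rw [indicator_of_mem hxS] at hx ⊢
    exact Real.rpow_le_rpow (abs_nonneg _) hx hp.le
  · rw [indicator_of_notMem hxS] at hx ⊢
    rw [le_antisymm hx (abs_nonneg _), Real.zero_rpow hp.ne']

theorem rpow_integral_abs_finiteDiff_sum_truncPow_rpow_le (hkr : k < r) (hp : 0 < p) {h : ℝ}
    (hh : 0 ≤ h) (s : Set ℝ) :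
    (∫ x in s, |finiteDiff r h (fun y => ∑ i, c i * truncPow k (a i) y) x| ^ p) ^ (1 / p)
      ≤ (∑ i, |c i|) * 2 ^ r * r ^ k * (Fintype.card ι * r) ^ (1 / p)
          * h ^ ((k : ℝ) + 1 / p) := by
  have hA : 0 ≤ (∑ i, |c i|) * (2 ^ r * (r * h) ^ k) := by positivity
  calc _ ≤ (((∑ i, |c i|) * (2 ^ r * (r * h) ^ k)) ^ p
          * (Fintype.card ι * (r * h))) ^ (1 / p) :=
        Real.rpow_le_rpow (setIntegral_nonneg_of_ae (.of_forall fun x => by positivity))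
          (integral_abs_finiteDiff_sum_truncPow_rpow_le c a hkr hp hh s) (by positivity)
    _ = _ := by
        rw [Real.mul_rpow (by positivity) (by positivity), one_div, Real.rpow_rpow_inv hA hp.ne',
          ← mul_assoc (Fintype.card ι : ℝ), Real.mul_rpow (by positivity) hh,
          Real.rpow_add' hh (by positivity), Real.rpow_natCast]
        ring

theorem modSmooth_sum_truncPow_le (hkr : k < r) (hp : 0 < p) {t : ℝ} (ht : 0 ≤ t) :
    modSmooth p r (fun y => ∑ i, c i * truncPow k (a i) y) t
      ≤ (∑ i, |c i|) * 2 ^ r * r ^ k * (Fintype.card ι * r) ^ (1 / p)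
          * t ^ ((k : ℝ) + 1 / p) := by
  refine Real.sSup_le ?_ (by positivity)
  rintro _ ⟨h, ⟨hh, hht⟩, rfl⟩
  exact (rpow_integral_abs_finiteDiff_sum_truncPow_rpow_le c a hkr hp hh.le _).trans
    (by gcongr)

end SumTruncPow

theorem bspline_modSmooth_bound_general (k : ℕ) (ξ : Fin (k + 2) → ℝ) (hξ : StrictMono ξ)
    (p : ℝ) (hp : 1 ≤ p) (r : ℕ) (hr : k + 1 ≤ r) :
    ∃ C > 0, ∀ t ∈ Set.Ioc (0 : ℝ) 1,
      modSmooth p r (bspline k ξ) t ≤ C * t ^ ((k : ℝ) + 1 / p) := by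
  set c : Fin (k + 2) → ℝ :=
    fun i => (-1) ^ (k + 1) * (ξ (Fin.last _) - ξ 0) * nodalWeight Finset.univ ξ i
  have hB : bspline k ξ = fun x => ∑ i, c i * truncPow k (ξ i) x := by
    funext x
    rw [bspline_eq_sum_nodalWeight_mul_truncPow k hξ, Finset.mul_sum]
    simp only [c, mul_assoc]
  set K := (∑ i, |c i|) * 2 ^ r * r ^ k * (Fintype.card (Fin (k + 2)) * r) ^ (1 / p)
  refine ⟨K + 1, by positivity, fun t ⟨ht, _⟩ => ?_⟩
  rw [hB]
  exact (modSmooth_sum_truncPow_le c ξ (by omega) (by linarith) ht.le).trans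
    (by gcongr; linarith)

/-- for `k ≥ 1`, a strictly increasing knot vector in `[0,1]`,
`1 ≤ p < ∞` and an integer `r ≥ k + 1`, there is a constant `C > 0` with
`ω_r(B_k(·; ξ), t)_p ≤ C · t^{k + 1/p}` for all `t ∈ (0, 1]`. -/
theorem bspline_modSmooth_bound (k : ℕ) (hk : 1 ≤ k) (ξ : Fin (k + 2) → ℝ)
    (hξ : StrictMono ξ) (hξ0 : 0 ≤ ξ 0) (hξ1 : ξ (Fin.last (k + 1)) ≤ 1)
    (p : ℝ) (hp : 1 ≤ p) (r : ℕ) (hr : k + 1 ≤ r) :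
    ∃ C > 0, ∀ t ∈ Set.Ioc (0 : ℝ) 1,
      modSmooth p r (bspline k ξ) t ≤ C * t ^ ((k : ℝ) + 1 / p) :=
  bspline_modSmooth_bound_general k ξ hξ p hp r hr
end
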